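/- Let ω ∈ ℝ and K, T > 0 satisfy ω > 2KT, and let μ0 ∈ (0,1/2) be such that f̄ attains its minimum over [0,1] exactly at μ0 and μ1 := 1−μ0. Then f̄ is nonincreasing on the interval [0, μ0], nondecreasing on [μ0, 1/2], nonincreasing on [1/2, μ1], and nondecreasing on [μ1, 1]. -/

import Mathlib

/-!
On `(0, 1)` the second derivative `-2ω + KT / (s(1-s))` of `f̄` vanishes only where
`s(1-s) = KT / (2ω)`, hence at most once in `(0, 1/2)`. As `f̄'(1/2) = 0`, Rolle's theorem
leaves `f̄'` at most one zero in `(0, 1/2)`, and the interior minimum `μ0` is one. So `f̄` is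
injective, hence strictly monotone, on `[0, μ0]` and on `[μ0, 1/2]`, in the directions forced
by `f̄ μ0 < f̄ 0` and `f̄ μ0 < f̄ (1/2)`; the symmetry `f̄ (1 - s) = f̄ s` gives the other half.
-/

open Real Set

/-- The chemical free energy density `f̄(s) = ω s(1-s) + K T (s log s + (1-s) log (1-s))`.
Since `Real.log 0 = 0`, this formula automatically realizes the continuous extension
`f̄(0) = f̄(1) = 0`. -/
noncomputable def fbar (ω K T : ℝ) (s : ℝ) : ℝ :=
  ω * s * (1 - s) + K * T * (s * Real.log s + (1 - s) * Real.log (1 - s))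

theorem injOn_Icc_of_hasDerivAt_ne_zero {f f' : ℝ → ℝ} {a b : ℝ}
    (hf : ContinuousOn f (Icc a b)) (hf' : ∀ x ∈ Ioo a b, HasDerivAt f (f' x) x)
    (hf'₀ : ∀ x ∈ Ioo a b, f' x ≠ 0) : InjOn f (Icc a b) := by
  intro x hx y hy hxy
  by_contra hne
  wlog hlt : x < y generalizing x y
  · exact this hy hx hxy.symm (Ne.symm hne) (lt_of_le_of_ne (not_lt.1 hlt) (Ne.symm hne))
  have hsub : Icc x y ⊆ Icc a b := Icc_subset_Icc hx.1 hy.2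
  obtain ⟨c, hc, hc₀⟩ := exists_hasDerivAt_eq_zero hlt (hf.mono hsub) hxy
    fun c hc ↦ hf' c (Ioo_subset_Ioo hx.1 hy.2 hc)
  exact hf'₀ c (Ioo_subset_Ioo hx.1 hy.2 hc) hc₀

theorem antitoneOn_Icc_sub_of_monotoneOn {f : ℝ → ℝ} {a b c : ℝ}
    (hsymm : ∀ x, f (c - x) = f x) (hf : MonotoneOn f (Icc a b)) :
    AntitoneOn f (Icc (c - b) (c - a)) := by
  intro x hx y hy hxy
  rw [← hsymm x, ← hsymm y]
  exact hf ⟨by linarith [hy.2], by linarith [hy.1]⟩ ⟨by linarith [hx.2], by linarith [hx.1]⟩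
    (by linarith)

theorem monotoneOn_Icc_sub_of_antitoneOn {f : ℝ → ℝ} {a b c : ℝ}
    (hsymm : ∀ x, f (c - x) = f x) (hf : AntitoneOn f (Icc a b)) :
    MonotoneOn f (Icc (c - b) (c - a)) := by
  intro x hx y hy hxy
  rw [← hsymm x, ← hsymm y]
  exact hf ⟨by linarith [hy.2], by linarith [hy.1]⟩ ⟨by linarith [hx.2], by linarith [hx.1]⟩
    (by linarith)

noncomputable def fbarDeriv (ω K T s : ℝ) : ℝ :=
  ω * (1 - 2 * s) + K * T * (log s - log (1 - s))

noncomputable def fbarDeriv2 (ω K T s : ℝ) : ℝ :=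
  -(2 * ω) + K * T * (s⁻¹ + (1 - s)⁻¹)

theorem fbar_one_sub (ω K T s : ℝ) : fbar ω K T (1 - s) = fbar ω K T s := by
  simp only [fbar, sub_sub_cancel]
  ring

theorem continuous_fbar (ω K T : ℝ) : Continuous (fbar ω K T) := by
  unfold fbar
  fun_prop

theorem fbarDeriv_one_half (ω K T : ℝ) : fbarDeriv ω K T (1 / 2) = 0 := by
  norm_num [fbarDeriv]

section

variable {ω K T : ℝ}

theorem hasDerivAt_fbar {s : ℝ} (hs₀ : 0 < s) (hs₁ : s < 1) :
    HasDerivAt (fbar ω K T) (fbarDeriv ω K T s) s := by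
  have hsub : HasDerivAt (fun t : ℝ ↦ 1 - t) (-1) s := (hasDerivAt_id' s).const_sub 1
  have h := (((hasDerivAt_id' s).const_mul ω).mul hsub).add
    (((hasDerivAt_mul_log hs₀.ne').add
      ((hasDerivAt_mul_log (sub_pos.2 hs₁).ne').comp s hsub)).const_mul (K * T))
  exact h.congr_deriv (by simp only [fbarDeriv]; ring)

theorem hasDerivAt_fbarDeriv {s : ℝ} (hs₀ : 0 < s) (hs₁ : s < 1) :
    HasDerivAt (fbarDeriv ω K T) (fbarDeriv2 ω K T s) s := by
  have hsub : HasDerivAt (fun t : ℝ ↦ 1 - t) (-1) s := (hasDerivAt_id' s).const_sub 1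
  have h := (((hasDerivAt_id' s).const_mul 2).const_sub 1 |>.const_mul ω).add
    (((hasDerivAt_log hs₀.ne').sub
      ((hasDerivAt_log (sub_pos.2 hs₁).ne').comp s hsub)).const_mul (K * T))
  exact h.congr_deriv (by simp only [fbarDeriv2]; ring)

theorem fbarDeriv2_eq_zero_iff {t : ℝ} (ht₀ : 0 < t) (ht₁ : t < 1) :
    fbarDeriv2 ω K T t = 0 ↔ 2 * ω * (t * (1 - t)) = K * T := by
  have : t * (1 - t) ≠ 0 := (mul_pos ht₀ (sub_pos.2 ht₁)).ne'
  rw [fbarDeriv2, inv_add_inv ht₀.ne' (sub_pos.2 ht₁).ne', add_sub_cancel, neg_add_eq_zero,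
    mul_one_div, eq_div_iff this]

theorem fbarDeriv2_zeros_subsingleton (hKT : K * T ≠ 0) :
    {t ∈ Ioo 0 (1 / 2) | fbarDeriv2 ω K T t = 0}.Subsingleton := by
  rintro t ⟨ht, hzt⟩ u ⟨hu, hzu⟩
  rw [fbarDeriv2_eq_zero_iff ht.1 (by linarith [ht.2])] at hzt
  rw [fbarDeriv2_eq_zero_iff hu.1 (by linarith [hu.2])] at hzu
  have hω : ω ≠ 0 := by rintro rfl; exact hKT (by linarith)
  have : 2 * ω * ((t - u) * (1 - t - u)) = 0 := by linear_combination hzt - hzu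
  have h : (1 - t - u) ≠ 0 := by linarith [ht.2, hu.2]
  simpa [hω, h, sub_eq_zero] using this

theorem exists_fbarDeriv2_eq_zero {a b : ℝ} (ha : 0 < a) (hab : a < b) (hb : b < 1)
    (h : fbarDeriv ω K T a = fbarDeriv ω K T b) : ∃ t ∈ Ioo a b, fbarDeriv2 ω K T t = 0 :=
  exists_hasDerivAt_eq_zero hab
    (fun _ hx ↦ (hasDerivAt_fbarDeriv (ha.trans_le hx.1) (hx.2.trans_lt hb)).continuousAt
      |>.continuousWithinAt)
    h fun _ hx ↦ hasDerivAt_fbarDeriv (ha.trans hx.1) (hx.2.trans hb)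

theorem fbarDeriv_zeros_subsingleton (hKT : K * T ≠ 0) :
    {s ∈ Ioo 0 (1 / 2) | fbarDeriv ω K T s = 0}.Subsingleton := by
  rintro a ⟨ha, hza⟩ b ⟨hb, hzb⟩
  by_contra hne
  wlog hab : a < b generalizing a b
  · exact this hb hzb ha hza (Ne.symm hne) (lt_of_le_of_ne (not_lt.1 hab) (Ne.symm hne))
  obtain ⟨t, ht, hzt⟩ := exists_fbarDeriv2_eq_zero ha.1 hab (by linarith [hb.2])
    (hza.trans hzb.symm)
  obtain ⟨u, hu, hzu⟩ := exists_fbarDeriv2_eq_zero hb.1 hb.2 (by norm_num)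
    (hzb.trans (fbarDeriv_one_half ω K T).symm)
  have htu : t = u := fbarDeriv2_zeros_subsingleton hKT
    ⟨⟨ha.1.trans ht.1, ht.2.trans hb.2⟩, hzt⟩ ⟨⟨hb.1.trans hu.1, hu.2⟩, hzu⟩
  linarith [ht.2, hu.1]

end

theorem monotonicity_intervals_general (ω K T : ℝ) (hK : 0 < K) (hT : 0 < T)
    (μ0 : ℝ) (hμ0 : μ0 ∈ Set.Ioo (0 : ℝ) (1 / 2))
    (hmin : ∀ s ∈ Set.Icc (0 : ℝ) 1, s ≠ μ0 → s ≠ 1 - μ0 →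
      fbar ω K T μ0 < fbar ω K T s) :
    AntitoneOn (fbar ω K T) (Set.Icc 0 μ0) ∧
    MonotoneOn (fbar ω K T) (Set.Icc μ0 (1 / 2)) ∧
    AntitoneOn (fbar ω K T) (Set.Icc (1 / 2) (1 - μ0)) ∧
    MonotoneOn (fbar ω K T) (Set.Icc (1 - μ0) 1) := by
  have ⟨hμ0₀, hμ0₁⟩ := hμ0
  have hloc : IsLocalMin (fbar ω K T) μ0 :=
    Filter.eventually_of_mem (isOpen_Ioo.mem_nhds hμ0) fun s hs ↦ by
      rcases eq_or_ne s μ0 with rfl | hne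
      exacts [le_rfl, (hmin s ⟨hs.1.le, by linarith [hs.2]⟩ hne (by linarith [hs.2])).le]
  have hcrit : fbarDeriv ω K T μ0 = 0 :=
    hloc.hasDerivAt_eq_zero (hasDerivAt_fbar hμ0₀ (by linarith))
  have hne : ∀ s ∈ Ioo 0 (1 / 2), s ≠ μ0 → fbarDeriv ω K T s ≠ 0 := fun s hs hsμ hzs ↦
    hsμ (fbarDeriv_zeros_subsingleton (mul_pos hK hT).ne' ⟨hs, hzs⟩ ⟨hμ0, hcrit⟩)
  have hleft : AntitoneOn (fbar ω K T) (Icc 0 μ0) := by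
    refine ((continuous_fbar ω K T).continuousOn.strictAntiOn_of_injOn_Icc hμ0₀.le
      (hmin 0 ⟨le_rfl, zero_le_one⟩ hμ0₀.ne (by linarith)).le ?_).antitoneOn
    exact injOn_Icc_of_hasDerivAt_ne_zero (continuous_fbar ω K T).continuousOn
      (fun x hx ↦ hasDerivAt_fbar hx.1 (by linarith [hx.2]))
      (fun x hx ↦ hne x ⟨hx.1, hx.2.trans hμ0₁⟩ hx.2.ne)
  have hright : MonotoneOn (fbar ω K T) (Icc μ0 (1 / 2)) := by
    refine ((continuous_fbar ω K T).continuousOn.strictMonoOn_of_injOn_Icc hμ0₁.le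
      (hmin (1 / 2) ⟨by norm_num, by norm_num⟩ hμ0₁.ne' (by linarith)).le ?_).monotoneOn
    exact injOn_Icc_of_hasDerivAt_ne_zero (continuous_fbar ω K T).continuousOn
      (fun x hx ↦ hasDerivAt_fbar (hμ0₀.trans hx.1) (by linarith [hx.2]))
      (fun x hx ↦ hne x ⟨hμ0₀.trans hx.1, hx.2⟩ hx.1.ne')
  refine ⟨hleft, hright, ?_, ?_⟩
  · convert antitoneOn_Icc_sub_of_monotoneOn (fbar_one_sub ω K T) hright using 2
    norm_num
  · simpa using monotoneOn_Icc_sub_of_antitoneOn (fbar_one_sub ω K T) hleft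

/-- If `ω > 2KT` and `f̄` attains its minimum over `[0,1]` exactly at `μ0 ∈ (0,1/2)` and
`μ1 = 1 - μ0`, then `f̄` is nonincreasing on `[0,μ0]`, nondecreasing on `[μ0,1/2]`,
nonincreasing on `[1/2,μ1]`, and nondecreasing on `[μ1,1]`. -/
theorem monotonicity_intervals (ω K T : ℝ) (hK : 0 < K) (hT : 0 < T)
    (hω : 2 * K * T < ω) (μ0 : ℝ) (hμ0 : μ0 ∈ Set.Ioo (0 : ℝ) (1 / 2))
    (hval : fbar ω K T μ0 = fbar ω K T (1 - μ0))
    (hmin : ∀ s ∈ Set.Icc (0 : ℝ) 1, s ≠ μ0 → s ≠ 1 - μ0 →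
      fbar ω K T μ0 < fbar ω K T s) :
    AntitoneOn (fbar ω K T) (Set.Icc 0 μ0) ∧
    MonotoneOn (fbar ω K T) (Set.Icc μ0 (1 / 2)) ∧
    AntitoneOn (fbar ω K T) (Set.Icc (1 / 2) (1 - μ0)) ∧
    MonotoneOn (fbar ω K T) (Set.Icc (1 - μ0) 1) :=
  monotonicity_intervals_general ω K T hK hT μ0 hμ0 hmin
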